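/- arXiv:2010.09247 — 2 statements merged into one kernel-verified Lean document; each statement's English description precedes it below -/
import Mathlib

section
/- Suppose the sequence (C^k)_{k∈ℕ} in ℝ^N satisfies the recursion C^{k+1} = P(D C^k + V) for all k ∈ ℕ, and suppose there exists an integer K ≥ 1 with C^K = C^0 (periodicity after K laps). Then for every k ∈ ℕ, C^k = (I − PD)^{-1} P V; in particular the sequence (C^k)_{k∈ℕ} is constant. -/
/-!
The map `F x = P (D x + V)` is a contraction for the sup norm, with constant `max |d n| < 1`,
since `P` only permutes coordinates. A periodic point of a contraction is a fixed point: `x` and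
`F x` are both fixed by the contraction `F^[K]`. So `C^0` is the unique fixed point of `F`, i.e.
`(I - PD) C^0 = PV`, and `I - PD` is invertible because `PD` is itself a contraction.
-/

open Function Matrix NNReal

theorem ContractingWith.isFixedPt_of_isPeriodicPt {α : Type*} [MetricSpace α] {K : ℝ≥0}
    {f : α → α} (hf : ContractingWith K f) {n : ℕ} {x : α} (hn : 0 < n)
    (hx : IsPeriodicPt f n x) : IsFixedPt f x :=
  have hfn : ContractingWith (K ^ n) f^[n] := ⟨pow_lt_one₀ K.2 hf.1 hn.ne', hf.2.iterate n⟩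
  hfn.fixedPoint_unique' hx.apply hx

section

variable {n 𝕜 : Type*} [Fintype n] [NormedField 𝕜] {A : Matrix n n 𝕜} {K : ℝ≥0}

theorem Matrix.contractingWith_mulVec_add (hK : K < 1) (hA : ∀ x, ‖A *ᵥ x‖ ≤ K * ‖x‖)
    (b : n → 𝕜) : ContractingWith K fun x => A *ᵥ x + b :=
  ⟨hK, LipschitzWith.of_dist_le_mul fun x y => by
    simpa only [dist_eq_norm, add_sub_add_right_eq_sub, ← mulVec_sub] using hA (x - y)⟩

theorem Matrix.isUnit_one_sub_of_norm_mulVec_le [DecidableEq n] (hK : K < 1)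
    (hA : ∀ x, ‖A *ᵥ x‖ ≤ K * ‖x‖) : IsUnit (1 - A) := by
  rw [← mulVec_injective_iff_isUnit]
  intro x y hxy
  have hfix : ∀ z, (1 - A) *ᵥ z = (1 - A) *ᵥ x → IsFixedPt (fun v => A *ᵥ v + (1 - A) *ᵥ x) z :=
    fun z hz => by simp [IsFixedPt, ← hz, sub_mulVec]
  exact (contractingWith_mulVec_add hK hA _).fixedPoint_unique' (hfix x rfl) (hfix y hxy.symm)

theorem Matrix.norm_permMatrix_mul_diagonal_mulVec_le [DecidableEq n] (σ : Equiv.Perm n)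
    (d : n → 𝕜) (x : n → 𝕜) :
    ‖(σ.permMatrix 𝕜 * diagonal d) *ᵥ x‖ ≤ (Finset.univ.sup fun i => ‖d i‖₊) * ‖x‖ := by
  rw [← mulVec_mulVec, permMatrix_mulVec]
  refine (pi_norm_le_iff_of_nonneg (by positivity)).2 fun i => ?_
  rw [Function.comp_apply, mulVec_diagonal, norm_mul]
  exact mul_le_mul (Finset.le_sup (f := fun i => ‖d i‖₊) (Finset.mem_univ (σ i)))
    (norm_le_pi_norm x (σ i)) (norm_nonneg _) (by positivity)

end

theorem stmt4_general (N : ℕ) (σ : Equiv.Perm (Fin N)) (d : Fin N → ℝ)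
    (hd : ∀ n, 0 < d n ∧ d n < 1)
    (P D : Matrix (Fin N) (Fin N) ℝ)
    (hP : P = Matrix.of fun i j => if σ i = j then (1 : ℝ) else 0)
    (hD : D = Matrix.diagonal d)
    (V : Fin N → ℝ) (C : ℕ → Fin N → ℝ)
    (hrec : ∀ k : ℕ, C (k + 1) = P.mulVec (D.mulVec (C k) + V))
    (K : ℕ) (hK : 1 ≤ K) (hper : C K = C 0) :
    ∀ k : ℕ, C k = ((1 : Matrix (Fin N) (Fin N) ℝ) - P * D)⁻¹.mulVec (P.mulVec V) := by
  have hPσ : P = σ.permMatrix ℝ := by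
    ext i j
    simp [hP, PEquiv.toMatrix_apply, eq_comm]
  set c : ℝ≥0 := Finset.univ.sup fun i => ‖d i‖₊
  have hc : c < 1 := (Finset.sup_lt_iff zero_lt_one).2 fun i _ => by
    rw [← NNReal.coe_lt_one, coe_nnnorm, Real.norm_of_nonneg (hd i).1.le]
    exact (hd i).2
  have hPD : ∀ x, ‖(P * D) *ᵥ x‖ ≤ c * ‖x‖ := by
    rw [hPσ, hD]
    exact norm_permMatrix_mul_diagonal_mulVec_le σ d
  set F : (Fin N → ℝ) → Fin N → ℝ := fun x => (P * D) *ᵥ x + P *ᵥ V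
  have hCF : ∀ k, C k = F^[k] (C 0) := by
    intro k
    induction k with
    | zero => rfl
    | succ k ih => rw [iterate_succ_apply', ← ih, hrec, mulVec_add, mulVec_mulVec]
  have hfix : IsFixedPt F (C 0) :=
    (contractingWith_mulVec_add hc hPD _).isFixedPt_of_isPeriodicPt hK (by
      rw [IsPeriodicPt, IsFixedPt, ← hCF, hper])
  have := (isUnit_one_sub_of_norm_mulVec_le hc hPD).invertible
  intro k
  refine (inv_mulVec_eq_vec ?_).symm
  rw [hCF, hfix.iterate, sub_mulVec, one_mulVec, eq_sub_iff_add_eq']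
  exact hfix

/-- If `(C^k)` satisfies `C^{k+1} = P (D C^k + V)` and is `K`-periodic for some `K ≥ 1`
(`C^K = C^0`), then `C^k = (I - PD)⁻¹ P V` for every `k`; in particular the sequence is
constant. Here `P` is the permutation matrix of `σ` (acting by `(P.mulVec X) n = X (σ n)`)
and `D` is the diagonal matrix with entries `d n`, `0 < d n < 1`. -/
theorem stmt4 (N : ℕ) (hN : 1 ≤ N) (σ : Equiv.Perm (Fin N)) (d : Fin N → ℝ)
    (hd : ∀ n, 0 < d n ∧ d n < 1)
    (P D : Matrix (Fin N) (Fin N) ℝ)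
    (hP : P = Matrix.of fun i j => if σ i = j then (1 : ℝ) else 0)
    (hD : D = Matrix.diagonal d)
    (V : Fin N → ℝ) (C : ℕ → Fin N → ℝ)
    (hrec : ∀ k : ℕ, C (k + 1) = P.mulVec (D.mulVec (C k) + V))
    (K : ℕ) (hK : 1 ≤ K) (hper : C K = C 0) :
    ∀ k : ℕ, C k = ((1 : Matrix (Fin N) (Fin N) ℝ) - P * D)⁻¹.mulVec (P.mulVec V) :=
  stmt4_general N σ d hd P D hP hD V C hrec K hK hper
end

section
/- Suppose the sequence (C^k)_{k∈ℕ} in ℝ^N satisfies the recursion C^{k+1} = P(D C^k + V) for all k ∈ ℕ, and suppose there exists an integer K ≥ 1 with C^K = C^0. Then C^1 = C^0; that is, every KT-periodic evolution of the photo-inhibition states is already T-periodic (periodic after a single lap). -/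
/-!
With `P` and `D` as given, `X ↦ P (D X + V)` is `X ↦ (d * X + V) ∘ σ`, and since every `|d n| < 1`
it strictly decreases sup-norm distances between distinct points. Along any orbit the step length
`dist (F^[k] x) (F^[k+1] x)` is then nonincreasing in `k` and drops strictly at the first step unless
`F x = x`; on a `K`-periodic orbit it must return to its initial value, so `x` is fixed.
-/

open Function
open scoped Matrix

theorem Function.IsPeriodicPt.isFixedPt_of_dist_lt {α : Type*} [MetricSpace α] {F : α → α}
    (hF : ∀ x y, x ≠ y → dist (F x) (F y) < dist x y) {n : ℕ} {x : α} (hn : 0 < n)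
    (hx : IsPeriodicPt F n x) : IsFixedPt F x := by
  by_contra hFx
  have hF_le : ∀ a b, dist (F a) (F b) ≤ dist a b := fun a b => by
    rcases eq_or_ne a b with rfl | hab
    · simp
    · exact (hF a b hab).le
  let g : ℕ → ℝ := fun k => dist (F^[k] x) (F^[k + 1] x)
  have hg_anti : Antitone g := antitone_nat_of_succ_le fun k => by
    simpa only [g, iterate_succ_apply'] using hF_le _ _
  have hg_succ : g 1 < g 0 := by simpa [g] using hF _ _ (Ne.symm hFx)
  have hg_period : g n = g 0 := by
    simp only [g, iterate_succ_apply', hx.eq, iterate_zero_apply]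
  exact (hg_period.symm.trans_le (hg_anti hn)).not_gt hg_succ

theorem Pi.norm_mul_comp_lt {ι 𝕜 : Type*} [Fintype ι] [NormedField 𝕜] (σ : Equiv.Perm ι)
    {w : ι → 𝕜} (hw : ∀ i, ‖w i‖ < 1) {x : ι → 𝕜} (hx : x ≠ 0) : ‖(w * x) ∘ σ‖ < ‖x‖ := by
  have hx_pos : 0 < ‖x‖ := norm_pos_iff.mpr hx
  refine (pi_norm_lt_iff hx_pos).mpr fun i => ?_
  calc ‖w (σ i) * x (σ i)‖ = ‖w (σ i)‖ * ‖x (σ i)‖ := norm_mul _ _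
    _ ≤ ‖w (σ i)‖ * ‖x‖ := by gcongr; exact norm_le_pi_norm x (σ i)
    _ < ‖x‖ := mul_lt_of_lt_one_left hx_pos (hw _)

theorem Pi.dist_mul_add_comp_lt {ι 𝕜 : Type*} [Fintype ι] [NormedField 𝕜] (σ : Equiv.Perm ι)
    {w : ι → 𝕜} (hw : ∀ i, ‖w i‖ < 1) (v : ι → 𝕜) {x y : ι → 𝕜} (hxy : x ≠ y) :
    dist ((w * x + v) ∘ σ) ((w * y + v) ∘ σ) < dist x y := by
  have hsub : (w * x + v) ∘ σ - (w * y + v) ∘ σ = (w * (x - y)) ∘ σ := by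
    ext i
    simp only [Pi.sub_apply, comp_apply, Pi.add_apply, Pi.mul_apply]
    ring
  rw [dist_eq_norm, dist_eq_norm, hsub]
  exact Pi.norm_mul_comp_lt σ hw (sub_ne_zero.mpr hxy)

theorem Matrix.of_perm_mulVec {ι R : Type*} [Fintype ι] [DecidableEq ι] [NonAssocSemiring R]
    (σ : Equiv.Perm ι) (x : ι → R) :
    (Matrix.of fun i j => if σ i = j then (1 : R) else 0) *ᵥ x = x ∘ σ := by
  ext i
  simp [Matrix.mulVec, dotProduct]

theorem stmt5_general (N : ℕ) (σ : Equiv.Perm (Fin N)) (d : Fin N → ℝ)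
    (hd : ∀ n, 0 < d n ∧ d n < 1)
    (P D : Matrix (Fin N) (Fin N) ℝ)
    (hP : P = Matrix.of fun i j => if σ i = j then (1 : ℝ) else 0)
    (hD : D = Matrix.diagonal d)
    (V : Fin N → ℝ) (C : ℕ → Fin N → ℝ)
    (hrec : ∀ k : ℕ, C (k + 1) = P.mulVec (D.mulVec (C k) + V))
    (K : ℕ) (hK : 1 ≤ K) (hper : C K = C 0) :
    C 1 = C 0 := by
  set F : (Fin N → ℝ) → Fin N → ℝ := fun X => (d * X + V) ∘ σ
  have hstep : ∀ k, C (k + 1) = F (C k) := fun k => by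
    ext n
    rw [hrec, hP, hD, Matrix.of_perm_mulVec]
    simp [F, Matrix.mulVec_diagonal]
  have horbit : ∀ k, C k = F^[k] (C 0) := fun k => by
    induction k with
    | zero => rfl
    | succ k ih => rw [hstep, ih, iterate_succ_apply']
  have hd_norm : ∀ n, ‖d n‖ < 1 := fun n => by
    rw [Real.norm_eq_abs, abs_lt]
    constructor <;> linarith [hd n]
  have hperiodic : IsPeriodicPt F K (C 0) := by rw [IsPeriodicPt, IsFixedPt, ← horbit, hper]
  rw [hstep]
  exact hperiodic.isFixedPt_of_dist_lt (fun x y => Pi.dist_mul_add_comp_lt σ hd_norm V) hK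

/-- If `(C^k)` satisfies `C^{k+1} = P (D C^k + V)` and `C^K = C^0` for some `K ≥ 1`, then
`C^1 = C^0`: every `KT`-periodic evolution is already `T`-periodic. Here `P` is the
permutation matrix of `σ` (acting by `(P.mulVec X) n = X (σ n)`) and `D` is the diagonal
matrix with entries `d n`, `0 < d n < 1`. -/
theorem stmt5 (N : ℕ) (hN : 1 ≤ N) (σ : Equiv.Perm (Fin N)) (d : Fin N → ℝ)
    (hd : ∀ n, 0 < d n ∧ d n < 1)
    (P D : Matrix (Fin N) (Fin N) ℝ)
    (hP : P = Matrix.of fun i j => if σ i = j then (1 : ℝ) else 0)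
    (hD : D = Matrix.diagonal d)
    (V : Fin N → ℝ) (C : ℕ → Fin N → ℝ)
    (hrec : ∀ k : ℕ, C (k + 1) = P.mulVec (D.mulVec (C k) + V))
    (K : ℕ) (hK : 1 ≤ K) (hper : C K = C 0) :
    C 1 = C 0 :=
  stmt5_general N σ d hd P D hP hD V C hrec K hK hper
end
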